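/- Let n ≥ 2 and let Ω ⊆ ℝⁿ be a bounded open strictly convex set with B_{r₁}(ξ₁) ⊆ Ω ⊆ B_{r₂}(ξ₂) for some radii 0 < r₁ ≤ r₂ and points ξ₁, ξ₂ ∈ ℝⁿ. Let u ∈ C²(Ω) ∩ C⁰(Ω̄) be a strictly convex function with (det D²u)^{1/n} = f in Ω and u = 0 on ∂Ω, where sup_Ω |f − 1| < 1, and let w ∈ C²(Ω) ∩ C⁰(Ω̄) be convex with det D²w = 1 in Ω and w = 0 on ∂Ω. Then: (a) −r₂²/2 ≤ inf_Ω w ≤ −r₁²/2; (b) sup_Ω |u − w| ≤ (r₂²/2)·sup_Ω |f − 1|; (c) |inf_Ω u − inf_Ω w| ≤ sup_Ω |u − w|. -/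

import Mathlib

/-!
Everything rests on the comparison principle for the Monge–Ampère operator: if `D²u ≥ 0`,
`det D²v ≤ det D²u` in `Ω` and `u ≤ v` on `∂Ω`, then `u ≤ v` in `Ω`. For a strict inequality
of determinants this holds because at an interior minimum of `v - u` we have `D²u ≤ D²v` in the
Loewner order, and the determinant is monotone on positive semidefinite matrices; the general
case follows by perturbing `u` by `ε (|x|² - R²) / 2`.

The paraboloids `(|x - ξ|² - r²) / 2` solve `det D² = 1`, so comparing `w` with those of the
inner and outer balls gives (a). Since `det D²((1 ± δ) w) = (1 ± δ)ⁿ` brackets `fⁿ`,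
comparison gives `(1 + δ) w ≤ u ≤ (1 - δ) w`, hence `|u - w| ≤ δ |w| ≤ δ r₂² / 2`, which is (b);
(c) holds for any two functions.
-/

open scoped RealInnerProductSpace
noncomputable section

abbrev Euc (n : ℕ) := EuclideanSpace ℝ (Fin n)

def hessianMatrix {n : ℕ} (u : Euc n → ℝ) (x : Euc n) : Matrix (Fin n) (Fin n) ℝ :=
  Matrix.of fun i j =>
    iteratedFDeriv ℝ 2 u x ![EuclideanSpace.single i 1, EuclideanSpace.single j 1]

def hessDet {n : ℕ} (u : Euc n → ℝ) (x : Euc n) : ℝ := (hessianMatrix u x).det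

open Filter Topology Matrix
open scoped MatrixOrder

section SecondDerivative

variable {E : Type*} [NormedAddCommGroup E] [NormedSpace ℝ E] {g : E → ℝ} {x : E}

theorem IsLocalMin.deriv_deriv_nonneg {φ : ℝ → ℝ} {a : ℝ} (h : IsLocalMin φ a)
    (hc : ContinuousAt φ a) : 0 ≤ deriv (deriv φ) a := by
  by_contra! hneg
  have hmax : IsLocalMax φ a := isLocalMax_of_deriv_deriv_neg hneg h.deriv_eq_zero hc
  have hconst : φ =ᶠ[𝓝 a] fun _ => φ a := (h.and hmax).mono fun t ht => le_antisymm ht.2 ht.1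
  rw [hconst.deriv.deriv_eq] at hneg
  simp at hneg

theorem ConvexOn.deriv_deriv_nonneg {φ : ℝ → ℝ} {s : Set ℝ} {a : ℝ} (hs : s ∈ 𝓝 a)
    (hφ : ConvexOn ℝ s φ) (hd : ∀ t ∈ s, DifferentiableAt ℝ φ t) : 0 ≤ deriv (deriv φ) a := by
  rw [← derivWithin_of_mem_nhds hs]
  exact (hφ.monotoneOn_deriv hd).derivWithin_nonneg

theorem deriv_deriv_comp_add_smul (hg : ContDiffAt ℝ 2 g x) (e : E) :
    deriv (deriv fun t : ℝ => g (x + t • e)) 0 = fderiv ℝ (fderiv ℝ g) x e e := by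
  have hline (t : ℝ) : HasDerivAt (fun t : ℝ => x + t • e) e t := by
    simpa using ((hasDerivAt_id t).smul_const e).const_add x
  have hdiff : ∀ᶠ t in 𝓝 (0 : ℝ), DifferentiableAt ℝ g (x + t • e) := by
    have := (hg.eventually (by simp)).mono fun y hy => hy.differentiableAt (by simp)
    exact (hline 0).continuousAt.tendsto.eventually (by simpa using this)
  have hderiv : deriv (fun t : ℝ => g (x + t • e)) =ᶠ[𝓝 0] fun t => fderiv ℝ g (x + t • e) e :=
    hdiff.mono fun t ht => (ht.hasFDerivAt.comp_hasDerivAt t (hline t)).deriv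
  rw [hderiv.deriv_eq]
  have h2 : HasFDerivAt (fderiv ℝ g) (fderiv ℝ (fderiv ℝ g) x) (x + (0 : ℝ) • e) := by
    simpa using ((hg.fderiv_right (m := 1) (by norm_num)).differentiableAt one_ne_zero).hasFDerivAt
  exact ((ContinuousLinearMap.apply ℝ ℝ e).hasFDerivAt.comp_hasDerivAt 0
    (h2.comp_hasDerivAt 0 (hline 0))).deriv

theorem IsLocalMin.fderiv_fderiv_self_nonneg (h : IsLocalMin g x) (hg : ContDiffAt ℝ 2 g x)
    (e : E) : 0 ≤ fderiv ℝ (fderiv ℝ g) x e e := by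
  have hline : ContinuousAt (fun t : ℝ => x + t • e) 0 := by fun_prop
  rw [← deriv_deriv_comp_add_smul hg e]
  refine IsLocalMin.deriv_deriv_nonneg ?_ ?_
  · exact IsLocalMin.comp_continuous (g := fun t : ℝ => x + t • e) (by simpa using h) hline
  · exact ContinuousAt.comp (g := g) (by simpa using hg.continuousAt) hline

theorem ConvexOn.fderiv_fderiv_self_nonneg {s : Set E} (hs : IsOpen s) (hconv : ConvexOn ℝ s g)
    (hg : ContDiffOn ℝ 2 g s) (hx : x ∈ s) (e : E) : 0 ≤ fderiv ℝ (fderiv ℝ g) x e e := by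
  let L : ℝ →ᵃ[ℝ] E := AffineMap.lineMap x (x + e)
  have hL (t : ℝ) : L t = x + t • e := by
    simp [L, AffineMap.lineMap_apply, add_comm]
  have hφ : (fun t : ℝ => g (x + t • e)) = g ∘ L := by
    funext t; simp [hL]
  rw [← deriv_deriv_comp_add_smul ((hg x hx).contDiffAt (hs.mem_nhds hx)) e, hφ]
  refine (hconv.comp_affineMap L).deriv_deriv_nonneg ?_ fun t ht => ?_
  · exact (hs.preimage L.continuous_of_finiteDimensional).mem_nhds (by simpa [hL] using hx)
  · have hxt : x + t • e ∈ s := hL t ▸ ht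
    rw [← hφ]
    exact (((hg _ hxt).contDiffAt (hs.mem_nhds hxt)).differentiableAt (by simp)).comp t
      (by fun_prop)

end SecondDerivative

namespace Matrix

variable {ι : Type*} [Fintype ι] [DecidableEq ι]

theorem IsHermitian.det_add_smul_one {A : Matrix ι ι ℝ} (hA : A.IsHermitian) (c : ℝ) :
    (A + c • 1).det = ∏ i, (hA.eigenvalues i + c) := by
  have h := congrArg (Polynomial.eval (-c)) hA.charpoly_eq
  rw [eval_charpoly, Polynomial.eval_prod] at h
  have hneg : scalar ι (-c) - A = -(A + c • 1) := by
    rw [scalar_apply, neg_add, smul_one_eq_diagonal, diagonal_neg]; abel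
  rw [hneg, det_neg] at h
  simp only [Polynomial.eval_sub, Polynomial.eval_X, Polynomial.eval_C, RCLike.ofReal_real_eq_id,
    id] at h
  have : ∏ i, (-c - hA.eigenvalues i) = (-1) ^ Fintype.card ι * ∏ i, (hA.eigenvalues i + c) := by
    rw [← Finset.card_univ, ← Finset.prod_const, ← Finset.prod_mul_distrib]
    exact Finset.prod_congr rfl fun i _ => by ring
  rw [this] at h
  exact mul_left_cancel₀ (pow_ne_zero _ (by norm_num)) h

theorem PosSemidef.det_lt_det_add_smul_one [Nonempty ι] {A : Matrix ι ι ℝ} (hA : A.PosSemidef)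
    {ε : ℝ} (hε : 0 < ε) : A.det < (A + ε • 1).det := by
  rw [hA.isHermitian.det_add_smul_one, hA.isHermitian.det_eq_prod_eigenvalues]
  calc ∏ i, (hA.isHermitian.eigenvalues i : ℝ)
      ≤ ∏ i, (hA.isHermitian.eigenvalues i + ε / 2) :=
        Finset.prod_le_prod (fun i _ => hA.eigenvalues_nonneg i)
          fun i _ => by linarith
    _ < ∏ i, (hA.isHermitian.eigenvalues i + ε) :=
        Finset.prod_lt_prod_of_nonempty (fun i _ => by linarith [hA.eigenvalues_nonneg i])
          (fun i _ => by linarith) Finset.univ_nonempty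

theorem det_le_one_of_le_one {M : Matrix ι ι ℝ} (hM : 0 ≤ M) (hM1 : M ≤ 1) : M.det ≤ 1 := by
  have hMh := hM.posSemidef.isHermitian
  rw [hMh.det_eq_prod_eigenvalues]
  refine Finset.prod_le_one (fun i _ => hM.posSemidef.eigenvalues_nonneg i) fun i _ => ?_
  set v := hMh.eigenvectorBasis i
  have hv : star ⇑v ⬝ᵥ ⇑v = 1 := by
    have h := real_inner_self_eq_norm_sq v
    rw [hMh.eigenvectorBasis.orthonormal.1 i, one_pow, EuclideanSpace.inner_eq_star_dotProduct,
      dotProduct_comm] at h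
    exact h
  have := (le_iff.1 hM1).dotProduct_mulVec_nonneg v
  rw [sub_mulVec, one_mulVec, dotProduct_sub, hv, sub_nonneg] at this
  simpa [hMh.eigenvalues_eq i] using this

theorem det_le_det {A B : Matrix ι ι ℝ} (hA : 0 ≤ A) (hAB : A ≤ B) : A.det ≤ B.det := by
  have hB : 0 ≤ B := hA.trans hAB
  by_cases hBpd : B.PosDef
  · set C := CFC.sqrt B
    have hCC : C * C = B := CFC.sqrt_mul_sqrt_self B hB
    have hCh : star C = C := (CFC.sqrt_nonneg B).posSemidef.isHermitian
    have hCu : IsUnit C.det := by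
      refine isUnit_iff_ne_zero.2 fun h => hBpd.det_pos.ne' ?_
      rw [← hCC, det_mul, h, zero_mul]
    have hCinv : star C⁻¹ = C⁻¹ := by
      rw [star_eq_conjTranspose, conjTranspose_nonsing_inv, ← star_eq_conjTranspose, hCh]
    set M := star C⁻¹ * A * C⁻¹
    have hM : 0 ≤ M := star_left_conjugate_nonneg hA _
    have hM1 : M ≤ 1 := by
      have hB1 : star C⁻¹ * B * C⁻¹ = 1 := by
        rw [hCinv, ← hCC, ← mul_assoc, nonsing_inv_mul _ hCu, one_mul, mul_nonsing_inv _ hCu]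
      exact hB1 ▸ star_left_conjugate_le_conjugate hAB C⁻¹
    have hA_eq : A = C * M * C := by
      simp only [M, hCinv, ← mul_assoc, mul_nonsing_inv _ hCu, one_mul]
      rw [mul_assoc, nonsing_inv_mul _ hCu, mul_one]
    calc A.det = B.det * M.det := by rw [hA_eq, ← hCC]; simp only [det_mul]; ring
      _ ≤ B.det * 1 :=
        mul_le_mul_of_nonneg_left (det_le_one_of_le_one hM hM1) hB.posSemidef.det_nonneg
      _ = B.det := mul_one _
  · obtain ⟨x, hx0, hBx⟩ : ∃ x : ι → ℝ, x ≠ 0 ∧ x ⬝ᵥ B *ᵥ x ≤ 0 := by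
      by_contra! h
      exact hBpd (posDef_iff_dotProduct_mulVec.2
        ⟨hB.posSemidef.isHermitian, fun x hx => by simpa using h x hx⟩)
    have hAx : A *ᵥ x = 0 := by
      refine (hA.posSemidef.dotProduct_mulVec_zero_iff x).1 (le_antisymm ?_ ?_)
      · have := (le_iff.1 hAB).dotProduct_mulVec_nonneg x
        simp only [star_trivial, sub_mulVec, dotProduct_sub, sub_nonneg] at this
        simpa using this.trans hBx
      · exact hA.posSemidef.dotProduct_mulVec_nonneg x
    rw [exists_mulVec_eq_zero_iff.1 ⟨x, hx0, hAx⟩]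
    exact hB.posSemidef.det_nonneg

end Matrix

section Hessian

variable {d : ℕ} {g h : Euc d → ℝ} {x : Euc d}

theorem hessianMatrix_apply (i j : Fin d) :
    hessianMatrix g x i j
      = fderiv ℝ (fderiv ℝ g) x (EuclideanSpace.single i 1) (EuclideanSpace.single j 1) := by
  simp [hessianMatrix, iteratedFDeriv_two_apply]

theorem dotProduct_hessianMatrix_mulVec (y : Fin d → ℝ) :
    y ⬝ᵥ hessianMatrix g x *ᵥ y
      = fderiv ℝ (fderiv ℝ g) x (WithLp.toLp 2 y) (WithLp.toLp 2 y) := by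
  have hy : WithLp.toLp 2 y = ∑ i, y i • EuclideanSpace.single i (1 : ℝ) := by
    ext j; simp [Pi.single_apply]
  rw [hy]
  simp only [dotProduct, mulVec, hessianMatrix_apply, map_sum, map_smul,
    FunLike.coe_sum, Finset.sum_apply, FunLike.coe_smul,
    Pi.smul_apply, smul_eq_mul, Finset.mul_sum]
  rw [Finset.sum_comm]
  exact Finset.sum_congr rfl fun i _ => Finset.sum_congr rfl fun j _ => by ring

theorem isHermitian_hessianMatrix (hg : ContDiffAt ℝ 2 g x) : (hessianMatrix g x).IsHermitian :=
  IsHermitian.ext fun i j => by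
    simpa [hessianMatrix_apply] using hg.isSymmSndFDerivAt (by simp) _ _

theorem posSemidef_hessianMatrix_of_nonneg (hg : ContDiffAt ℝ 2 g x)
    (h : ∀ e, 0 ≤ fderiv ℝ (fderiv ℝ g) x e e) : (hessianMatrix g x).PosSemidef :=
  posSemidef_iff_dotProduct_mulVec.2 ⟨isHermitian_hessianMatrix hg, fun y => by
    simpa [dotProduct_hessianMatrix_mulVec] using h _⟩

theorem ConvexOn.posSemidef_hessianMatrix {s : Set (Euc d)} (hs : IsOpen s)
    (hconv : ConvexOn ℝ s g) (hg : ContDiffOn ℝ 2 g s) (hx : x ∈ s) :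
    (hessianMatrix g x).PosSemidef :=
  posSemidef_hessianMatrix_of_nonneg ((hg x hx).contDiffAt (hs.mem_nhds hx))
    (hconv.fderiv_fderiv_self_nonneg hs hg hx)

theorem IsLocalMin.posSemidef_hessianMatrix (h : IsLocalMin g x) (hg : ContDiffAt ℝ 2 g x) :
    (hessianMatrix g x).PosSemidef :=
  posSemidef_hessianMatrix_of_nonneg hg (h.fderiv_fderiv_self_nonneg hg)

theorem hessianMatrix_add (hg : ContDiffAt ℝ 2 g x) (hh : ContDiffAt ℝ 2 h x) :
    hessianMatrix (g + h) x = hessianMatrix g x + hessianMatrix h x := by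
  ext i j; simp [hessianMatrix, iteratedFDeriv_add_apply hg hh]

theorem hessianMatrix_sub (hg : ContDiffAt ℝ 2 g x) (hh : ContDiffAt ℝ 2 h x) :
    hessianMatrix (g - h) x = hessianMatrix g x - hessianMatrix h x := by
  ext i j; simp [hessianMatrix, iteratedFDeriv_sub_apply hg hh]

theorem hessianMatrix_const_smul (c : ℝ) (hg : ContDiffAt ℝ 2 g x) :
    hessianMatrix (c • g) x = c • hessianMatrix g x := by
  ext i j; simp [hessianMatrix, iteratedFDeriv_const_smul_apply hg]

theorem hessDet_const_smul (c : ℝ) (hg : ContDiffAt ℝ 2 g x) :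
    hessDet (c • g) x = c ^ d * hessDet g x := by
  simp [hessDet, hessianMatrix_const_smul c hg]

end Hessian

section Paraboloid

def paraboloid {E : Type*} [SeminormedAddCommGroup E] (ξ : E) (r : ℝ) (x : E) : ℝ :=
  (‖x - ξ‖ ^ 2 - r ^ 2) / 2

section Values

variable {E : Type*} [SeminormedAddCommGroup E] (ξ : E) (r : ℝ)

theorem paraboloid_self : paraboloid ξ r ξ = -r ^ 2 / 2 := by
  simp [paraboloid, neg_div]

theorem neg_sq_div_two_le_paraboloid (x : E) : -r ^ 2 / 2 ≤ paraboloid ξ r x := by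
  unfold paraboloid; linarith [sq_nonneg ‖x - ξ‖]

theorem paraboloid_nonpos {x : E} (hx : x ∈ Metric.closedBall ξ r) : paraboloid ξ r x ≤ 0 := by
  rw [Metric.mem_closedBall, dist_eq_norm] at hx
  unfold paraboloid; nlinarith [norm_nonneg (x - ξ)]

theorem paraboloid_nonneg (hr : 0 ≤ r) {x : E} (hx : x ∉ Metric.ball ξ r) :
    0 ≤ paraboloid ξ r x := by
  rw [Metric.mem_ball, dist_eq_norm, not_lt] at hx
  unfold paraboloid; nlinarith

end Values

section Derivatives

variable {E : Type*} [NormedAddCommGroup E] [InnerProductSpace ℝ E] (ξ : E) (r : ℝ)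

theorem contDiff_paraboloid : ContDiff ℝ 2 (paraboloid ξ r) :=
  (((contDiff_norm_sq ℝ).comp (contDiff_id.sub contDiff_const)).sub contDiff_const).div_const 2

theorem fderiv_paraboloid : fderiv ℝ (paraboloid ξ r) = fun x => innerSL ℝ (x - ξ) := by
  funext x
  refine HasFDerivAt.fderiv ?_
  have := (((hasFDerivAt_id x).sub_const ξ).norm_sq.sub_const (r ^ 2)).mul_const (2⁻¹ : ℝ)
  have hfun : paraboloid ξ r = fun y => (‖id y - ξ‖ ^ 2 - r ^ 2) * 2⁻¹ := by
    funext y; simp [paraboloid, div_eq_mul_inv]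
  rw [hfun]
  refine this.congr_fderiv ?_
  ext y; simp

theorem fderiv_fderiv_paraboloid (x : E) :
    fderiv ℝ (fderiv ℝ (paraboloid ξ r)) x = innerSL ℝ := by
  have := (innerSL ℝ).hasFDerivAt.comp x ((hasFDerivAt_id x).sub_const ξ)
  rw [ContinuousLinearMap.comp_id] at this
  rw [fderiv_paraboloid]
  exact this.fderiv

theorem hessianMatrix_paraboloid {d : ℕ} (ξ x : Euc d) :
    hessianMatrix (paraboloid ξ r) x = 1 := by
  ext i j
  rw [hessianMatrix_apply, fderiv_fderiv_paraboloid, innerSL_apply_apply,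
    EuclideanSpace.inner_single_left]
  simp [Matrix.one_apply]

theorem hessDet_paraboloid {d : ℕ} (ξ x : Euc d) : hessDet (paraboloid ξ r) x = 1 := by
  rw [hessDet, hessianMatrix_paraboloid, Matrix.det_one]

end Derivatives

end Paraboloid

section ComparisonPrinciple

theorem exists_isLocalMin_of_frontier_nonneg {X : Type*} [PseudoMetricSpace X] [ProperSpace X]
    {Ω : Set X} (hΩ : IsOpen Ω) (hΩb : Bornology.IsBounded Ω) {g : X → ℝ}
    (hg : ContinuousOn g (closure Ω)) (hfr : ∀ x ∈ frontier Ω, 0 ≤ g x) {x₀ : X} (hx₀ : x₀ ∈ Ω)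
    (hneg : g x₀ < 0) : ∃ z ∈ Ω, IsLocalMin g z := by
  have hK : IsCompact (closure Ω) := hΩb.isCompact_closure
  obtain ⟨z, hz, hmin⟩ := hK.exists_isMinOn ⟨x₀, subset_closure hx₀⟩ hg
  have hzΩ : z ∈ Ω := by
    by_contra hzΩ
    have h₀ : g z ≤ g x₀ := hmin (subset_closure hx₀)
    linarith [hfr z (hΩ.frontier_eq ▸ ⟨hz, hzΩ⟩)]
  exact ⟨z, hzΩ, hmin.isLocalMin (mem_of_superset (hΩ.mem_nhds hzΩ) subset_closure)⟩

variable {d : ℕ} {Ω : Set (Euc d)} {u v : Euc d → ℝ}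

theorem le_of_hessDet_lt (hΩ : IsOpen Ω) (hΩb : Bornology.IsBounded Ω)
    (hu : ContDiffOn ℝ 2 u Ω) (huc : ContinuousOn u (closure Ω))
    (hv : ContDiffOn ℝ 2 v Ω) (hvc : ContinuousOn v (closure Ω))
    (hpsd : ∀ x ∈ Ω, (hessianMatrix u x).PosSemidef)
    (hdet : ∀ x ∈ Ω, hessDet v x < hessDet u x) (hbdry : ∀ x ∈ frontier Ω, u x ≤ v x) :
    ∀ x ∈ Ω, u x ≤ v x := by
  by_contra! ⟨x₀, hx₀, hlt⟩
  obtain ⟨z, hz, hmin⟩ := exists_isLocalMin_of_frontier_nonneg hΩ hΩb (hvc.sub huc)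
    (fun x hx => sub_nonneg.2 (hbdry x hx)) hx₀ (sub_neg.2 hlt)
  have huz := (hu z hz).contDiffAt (hΩ.mem_nhds hz)
  have hvz := (hv z hz).contDiffAt (hΩ.mem_nhds hz)
  have hle : hessianMatrix u z ≤ hessianMatrix v z := by
    rw [le_iff, ← hessianMatrix_sub hvz huz]
    exact hmin.posSemidef_hessianMatrix (hvz.sub huz)
  exact (det_le_det (hpsd z hz).nonneg hle).not_gt (hdet z hz)

theorem le_of_hessDet_le [NeZero d] (hΩ : IsOpen Ω) (hΩb : Bornology.IsBounded Ω)
    (hu : ContDiffOn ℝ 2 u Ω) (huc : ContinuousOn u (closure Ω))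
    (hv : ContDiffOn ℝ 2 v Ω) (hvc : ContinuousOn v (closure Ω))
    (hpsd : ∀ x ∈ Ω, (hessianMatrix u x).PosSemidef)
    (hdet : ∀ x ∈ Ω, hessDet v x ≤ hessDet u x) (hbdry : ∀ x ∈ frontier Ω, u x ≤ v x) :
    ∀ x ∈ Ω, u x ≤ v x := by
  obtain ⟨R, hR⟩ := hΩb.closure.subset_closedBall 0
  set p := paraboloid (0 : Euc d) R
  have hp := contDiff_paraboloid (0 : Euc d) R
  have hperturbed (ε : ℝ) (hε : 0 < ε) : ∀ x ∈ Ω, (u + ε • p) x ≤ v x := by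
    have hH : ∀ x ∈ Ω, hessianMatrix (u + ε • p) x = hessianMatrix u x + ε • 1 := fun x hx => by
      have hpε : ContDiffAt ℝ 2 (ε • p) x := hp.contDiffAt.const_smul ε
      rw [hessianMatrix_add ((hu x hx).contDiffAt (hΩ.mem_nhds hx)) hpε,
        hessianMatrix_const_smul ε hp.contDiffAt, hessianMatrix_paraboloid]
    refine le_of_hessDet_lt hΩ hΩb (hu.add (hp.contDiffOn.const_smul ε))
      (huc.add (hp.continuous.continuousOn.const_smul ε)) hv hvc (fun x hx => ?_) (fun x hx => ?_)
      (fun x hx => ?_)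
    · exact hH x hx ▸ (hpsd x hx).add (PosSemidef.one.smul hε.le)
    · rw [hessDet, hessDet, hH x hx]
      exact (hdet x hx).trans_lt ((hpsd x hx).det_lt_det_add_smul_one hε)
    · have := paraboloid_nonpos 0 R (hR (frontier_subset_closure hx))
      have := hbdry x hx
      simp only [Pi.add_apply, Pi.smul_apply, smul_eq_mul]
      nlinarith
  intro x hx
  have hlim : Tendsto (fun ε : ℝ => v x + ε * (R ^ 2 / 2)) (𝓝[>] 0) (𝓝 (v x)) := by
    have : Continuous (fun ε : ℝ => v x + ε * (R ^ 2 / 2)) := by fun_prop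
    simpa using (this.tendsto 0).mono_left nhdsWithin_le_nhds
  refine ge_of_tendsto hlim (eventually_nhdsWithin_of_forall fun ε hε => ?_)
  have := hperturbed ε hε x hx
  have := neg_sq_div_two_le_paraboloid (0 : Euc d) R x
  simp only [Pi.add_apply, Pi.smul_apply, smul_eq_mul] at *
  nlinarith [Set.mem_Ioi.1 hε]

end ComparisonPrinciple

section MongeAmpere

variable {d : ℕ} [NeZero d] {Ω : Set (Euc d)} {u w : Euc d → ℝ}

theorem paraboloid_le_of_hessDet_le_one (hΩ : IsOpen Ω) (hΩb : Bornology.IsBounded Ω)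
    {ξ : Euc d} {r : ℝ} (hΩr : Ω ⊆ Metric.ball ξ r)
    (hw : ContDiffOn ℝ 2 w Ω) (hwc : ContinuousOn w (closure Ω))
    (hdet : ∀ x ∈ Ω, hessDet w x ≤ 1) (hbdry : ∀ x ∈ frontier Ω, 0 ≤ w x) :
    ∀ x ∈ Ω, paraboloid ξ r x ≤ w x := by
  have hcl : closure Ω ⊆ Metric.closedBall ξ r :=
    (closure_mono hΩr).trans Metric.closure_ball_subset_closedBall
  refine le_of_hessDet_le hΩ hΩb (contDiff_paraboloid ξ r).contDiffOn
    (contDiff_paraboloid ξ r).continuous.continuousOn hw hwc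
    (fun x _ => by rw [hessianMatrix_paraboloid]; exact PosSemidef.one)
    (fun x hx => by rw [hessDet_paraboloid]; exact hdet x hx) fun x hx => ?_
  exact (paraboloid_nonpos ξ r (hcl (frontier_subset_closure hx))).trans (hbdry x hx)

theorem le_paraboloid_of_one_le_hessDet (hΩ : IsOpen Ω) (hΩb : Bornology.IsBounded Ω)
    {ξ : Euc d} {r : ℝ} (hr : 0 ≤ r) (hrΩ : Metric.ball ξ r ⊆ Ω)
    (hw : ContDiffOn ℝ 2 w Ω) (hwc : ContinuousOn w (closure Ω)) (hconv : ConvexOn ℝ Ω w)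
    (hdet : ∀ x ∈ Ω, 1 ≤ hessDet w x) (hbdry : ∀ x ∈ frontier Ω, w x ≤ 0) :
    ∀ x ∈ Ω, w x ≤ paraboloid ξ r x := by
  refine le_of_hessDet_le hΩ hΩb hw hwc (contDiff_paraboloid ξ r).contDiffOn
    (contDiff_paraboloid ξ r).continuous.continuousOn
    (fun x hx => hconv.posSemidef_hessianMatrix hΩ hw hx)
    (fun x hx => by rw [hessDet_paraboloid]; exact hdet x hx) fun x hx => ?_
  have hxΩ : x ∉ Ω := (hΩ.frontier_eq ▸ hx).2
  exact (hbdry x hx).trans (paraboloid_nonneg ξ r hr fun h => hxΩ (hrΩ h))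

theorem abs_sub_le_mul_neg_of_hessDet_eq_pow (hΩ : IsOpen Ω) (hΩb : Bornology.IsBounded Ω)
    (hu : ContDiffOn ℝ 2 u Ω) (huc : ContinuousOn u (closure Ω)) (hconvu : ConvexOn ℝ Ω u)
    (hw : ContDiffOn ℝ 2 w Ω) (hwc : ContinuousOn w (closure Ω)) (hconvw : ConvexOn ℝ Ω w)
    {f : Euc d → ℝ} {δ : ℝ} (hudet : ∀ x ∈ Ω, hessDet u x = f x ^ d)
    (hδ : ∀ x ∈ Ω, |f x - 1| ≤ δ) (hδ1 : δ < 1) (hwdet : ∀ x ∈ Ω, hessDet w x = 1)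
    (hubdry : ∀ x ∈ frontier Ω, u x = 0) (hwbdry : ∀ x ∈ frontier Ω, w x = 0) :
    ∀ x ∈ Ω, |u x - w x| ≤ δ * -w x := by
  have hf (x) (hx : x ∈ Ω) : 1 - δ ≤ f x ∧ f x ≤ 1 + δ := by
    constructor <;> linarith [abs_le.1 (hδ x hx)]
  have hwx (x) (hx : x ∈ Ω) : ContDiffAt ℝ 2 w x := (hw x hx).contDiffAt (hΩ.mem_nhds hx)
  have hdet_smul (c : ℝ) (x) (hx : x ∈ Ω) : hessDet (c • w) x = c ^ d := by
    rw [hessDet_const_smul c (hwx x hx), hwdet x hx, mul_one]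
  have hupper : ∀ x ∈ Ω, u x ≤ ((1 - δ) • w) x :=
    le_of_hessDet_le hΩ hΩb hu huc (hw.const_smul (1 - δ)) (hwc.const_smul (1 - δ))
      (fun x hx => hconvu.posSemidef_hessianMatrix hΩ hu hx)
      (fun x hx => by
        rw [hdet_smul _ x hx, hudet x hx]; exact pow_le_pow_left₀ (by linarith) (hf x hx).1 d)
      (fun x hx => by simp [hubdry x hx, hwbdry x hx])
  have hlower : ∀ x ∈ Ω, ((1 + δ) • w) x ≤ u x :=
    le_of_hessDet_le hΩ hΩb (hw.const_smul (1 + δ)) (hwc.const_smul (1 + δ)) hu huc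
      (fun x hx => by
        rw [hessianMatrix_const_smul _ (hwx x hx)]
        exact (hconvw.posSemidef_hessianMatrix hΩ hw hx).smul (by linarith [hf x hx]))
      (fun x hx => by
        rw [hdet_smul _ x hx, hudet x hx]
        exact pow_le_pow_left₀ (by linarith [hf x hx]) (hf x hx).2 d)
      (fun x hx => by simp [hubdry x hx, hwbdry x hx])
  intro x hx
  have h₁ := hupper x hx
  have h₂ := hlower x hx
  simp only [Pi.smul_apply, smul_eq_mul] at h₁ h₂
  exact abs_le.2 ⟨by linarith, by linarith⟩

end MongeAmpere

theorem abs_sInf_image_sub_sInf_image_le {α : Type*} {s : Set α} {u w : α → ℝ}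
    (hs : s.Nonempty) (hw : BddBelow (w '' s)) (hd : BddAbove ((fun x => |u x - w x|) '' s)) :
    |sInf (u '' s) - sInf (w '' s)| ≤ sSup ((fun x => |u x - w x|) '' s) := by
  set S := sSup ((fun x => |u x - w x|) '' s)
  have hS (x) (hx : x ∈ s) : |u x - w x| ≤ S := le_csSup hd (Set.mem_image_of_mem _ hx)
  have hu : BddBelow (u '' s) := by
    obtain ⟨m, hm⟩ := hw
    refine ⟨m - S, Set.forall_mem_image.2 fun x hx => ?_⟩
    have : m ≤ w x := hm (Set.mem_image_of_mem w hx)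
    linarith [(abs_le.1 (hS x hx)).1]
  have h₁ : sInf (u '' s) - S ≤ sInf (w '' s) :=
    le_csInf (hs.image w) <| Set.forall_mem_image.2 fun x hx => by
      linarith [csInf_le hu (Set.mem_image_of_mem u hx), (abs_le.1 (hS x hx)).2]
  have h₂ : sInf (w '' s) - S ≤ sInf (u '' s) :=
    le_csInf (hs.image u) <| Set.forall_mem_image.2 fun x hx => by
      linarith [csInf_le hw (Set.mem_image_of_mem w hx), (abs_le.1 (hS x hx)).1]
  exact abs_sub_le_iff.2 ⟨by linarith, by linarith⟩

theorem comparison_estimates_general (n : ℕ) (hn : 2 ≤ n)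
    (Ω : Set (Euc n)) (hΩopen : IsOpen Ω) (hΩbdd : Bornology.IsBounded Ω)
    (r₁ r₂ : ℝ) (ξ₁ ξ₂ : Euc n) (hr₁ : 0 < r₁)
    (hball₁ : Metric.ball ξ₁ r₁ ⊆ Ω) (hball₂ : Ω ⊆ Metric.ball ξ₂ r₂)
    (u f : Euc n → ℝ)
    (hu2 : ContDiffOn ℝ 2 u Ω) (huc : ContinuousOn u (closure Ω))
    (huconv : StrictConvexOn ℝ Ω u)
    (huf : ∀ x ∈ Ω, hessDet u x = f x ^ n)
    (hubdry : ∀ x ∈ frontier Ω, u x = 0)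
    (δ : ℝ) (hδ : ∀ x ∈ Ω, |f x - 1| ≤ δ) (hδ1 : δ < 1)
    (w : Euc n → ℝ)
    (hw2 : ContDiffOn ℝ 2 w Ω) (hwc : ContinuousOn w (closure Ω)) (hwconv : ConvexOn ℝ Ω w)
    (hwdet : ∀ x ∈ Ω, hessDet w x = 1)
    (hwbdry : ∀ x ∈ frontier Ω, w x = 0) :
    (-(r₂ ^ 2) / 2 ≤ sInf (w '' Ω) ∧ sInf (w '' Ω) ≤ -(r₁ ^ 2) / 2) ∧
    (∀ x ∈ Ω, |u x - w x| ≤ r₂ ^ 2 / 2 * δ) ∧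
    |sInf (u '' Ω) - sInf (w '' Ω)| ≤ sSup ((fun x => |u x - w x|) '' Ω) := by
  have : NeZero n := ⟨by omega⟩
  have hξ₁ : ξ₁ ∈ Ω := hball₁ (Metric.mem_ball_self hr₁)
  have hw_ge (x) (hx : x ∈ Ω) : -(r₂ ^ 2) / 2 ≤ w x :=
    (neg_sq_div_two_le_paraboloid ξ₂ r₂ x).trans <|
      paraboloid_le_of_hessDet_le_one hΩopen hΩbdd hball₂ hw2 hwc (fun x hx => (hwdet x hx).le)
        (fun x hx => (hwbdry x hx).ge) x hx
  have hw_le : w ξ₁ ≤ -(r₁ ^ 2) / 2 :=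
    (le_paraboloid_of_one_le_hessDet hΩopen hΩbdd hr₁.le hball₁ hw2 hwc hwconv
      (fun x hx => (hwdet x hx).ge) (fun x hx => (hwbdry x hx).le) ξ₁ hξ₁).trans_eq
      (paraboloid_self ξ₁ r₁)
  have hb (x) (hx : x ∈ Ω) : |u x - w x| ≤ r₂ ^ 2 / 2 * δ := by
    have hδ0 : 0 ≤ δ := (abs_nonneg _).trans (hδ x hx)
    have := abs_sub_le_mul_neg_of_hessDet_eq_pow hΩopen hΩbdd hu2 huc huconv.convexOn hw2 hwc
      hwconv huf hδ hδ1 hwdet hubdry hwbdry x hx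
    nlinarith [hw_ge x hx]
  have hw_bdd : BddBelow (w '' Ω) := ⟨_, Set.forall_mem_image.2 hw_ge⟩
  refine ⟨⟨le_csInf (Set.Nonempty.image w ⟨ξ₁, hξ₁⟩) (Set.forall_mem_image.2 hw_ge), ?_⟩, hb,
    abs_sInf_image_sub_sInf_image_le ⟨ξ₁, hξ₁⟩ hw_bdd ⟨_, Set.forall_mem_image.2 hb⟩⟩
  exact (csInf_le hw_bdd (Set.mem_image_of_mem w hξ₁)).trans hw_le

/-- Comparison with the unit-right-hand-side solution: if `B_{r₁}(ξ₁) ⊆ Ω ⊆ B_{r₂}(ξ₂)`,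
`u` is strictly convex with `(det D²u)^{1/n} = f`, `u = 0` on `∂Ω`, `sup_Ω |f − 1| ≤ δ < 1`,
and `w` is convex with `det D²w = 1`, `w = 0` on `∂Ω`, then
(a) `−r₂²/2 ≤ inf_Ω w ≤ −r₁²/2`;
(b) `sup_Ω |u − w| ≤ (r₂²/2)·δ`;
(c) `|inf_Ω u − inf_Ω w| ≤ sup_Ω |u − w|`. -/
theorem comparison_estimates (n : ℕ) (hn : 2 ≤ n)
    (Ω : Set (Euc n)) (hΩopen : IsOpen Ω) (hΩbdd : Bornology.IsBounded Ω)
    (hΩconv : StrictConvex ℝ Ω)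
    (r₁ r₂ : ℝ) (ξ₁ ξ₂ : Euc n) (hr₁ : 0 < r₁) (hr₁₂ : r₁ ≤ r₂)
    (hball₁ : Metric.ball ξ₁ r₁ ⊆ Ω) (hball₂ : Ω ⊆ Metric.ball ξ₂ r₂)
    (u f : Euc n → ℝ)
    (hu2 : ContDiffOn ℝ 2 u Ω) (huc : ContinuousOn u (closure Ω))
    (huconv : StrictConvexOn ℝ Ω u)
    (huf : ∀ x ∈ Ω, hessDet u x = f x ^ n)
    (hubdry : ∀ x ∈ frontier Ω, u x = 0)
    (δ : ℝ) (hδ : ∀ x ∈ Ω, |f x - 1| ≤ δ) (hδ1 : δ < 1)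
    (w : Euc n → ℝ)
    (hw2 : ContDiffOn ℝ 2 w Ω) (hwc : ContinuousOn w (closure Ω)) (hwconv : ConvexOn ℝ Ω w)
    (hwdet : ∀ x ∈ Ω, hessDet w x = 1)
    (hwbdry : ∀ x ∈ frontier Ω, w x = 0) :
    (-(r₂ ^ 2) / 2 ≤ sInf (w '' Ω) ∧ sInf (w '' Ω) ≤ -(r₁ ^ 2) / 2) ∧
    (∀ x ∈ Ω, |u x - w x| ≤ r₂ ^ 2 / 2 * δ) ∧
    |sInf (u '' Ω) - sInf (w '' Ω)| ≤ sSup ((fun x => |u x - w x|) '' Ω) :=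
  comparison_estimates_general n hn Ω hΩopen hΩbdd r₁ r₂ ξ₁ ξ₂ hr₁ hball₁ hball₂ u f hu2 huc huconv
    huf hubdry δ hδ hδ1 w hw2 hwc hwconv hwdet hwbdry
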